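/- For d = 2, the space SC_2(0,2;o) of two nonoverlapping semidiscs in the closed upper unit semidisc has exactly two path-connected components, namely {((x,r),(y,s)) ∈ SC_2(0,2;o) : x_1 < y_1} and {((x,r),(y,s)) ∈ SC_2(0,2;o) : x_1 > y_1}; each of these two components is path-connected (indeed convex as a subset of (ℝ² × ℝ)²), their union is all of SC_2(0,2;o), and the swap map τ exchanges them. -/

import Mathlib

noncomputable section

/-- The configuration space `SC_2(0,2;o)` of two nonoverlapping semidiscs in the closed
upper unit semidisc of `ℝ²`. -/
def SC02dim2 : Set ((EuclideanSpace ℝ (Fin 2) × ℝ) × (EuclideanSpace ℝ (Fin 2) × ℝ)) :=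
  {c | 0 < c.1.2 ∧ 0 < c.2.2 ∧
       c.1.1 (1 : Fin 2) = 0 ∧ c.2.1 (1 : Fin 2) = 0 ∧
       ‖c.1.1‖ + c.1.2 ≤ 1 ∧ ‖c.2.1‖ + c.2.2 ≤ 1 ∧
       ‖c.1.1 - c.2.1‖ ≥ c.1.2 + c.2.2}

/-- The part of `SC_2(0,2;o)` where the first semidisc lies to the left of the second
one, i.e. `x_1 < y_1`. -/
def leftPart : Set ((EuclideanSpace ℝ (Fin 2) × ℝ) × (EuclideanSpace ℝ (Fin 2) × ℝ)) :=
  {c ∈ SC02dim2 | c.1.1 (0 : Fin 2) < c.2.1 (0 : Fin 2)}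

/-- The part of `SC_2(0,2;o)` where the first semidisc lies to the right of the second
one, i.e. `x_1 > y_1`. -/
def rightPart : Set ((EuclideanSpace ℝ (Fin 2) × ℝ) × (EuclideanSpace ℝ (Fin 2) × ℝ)) :=
  {c ∈ SC02dim2 | c.2.1 (0 : Fin 2) < c.1.1 (0 : Fin 2)}


/-! For centres on the axis `‖x - y‖ = |x₁ - y₁|`, so nonoverlap forces `x₁ ≠ y₁`, and once the
sign of `y₁ - x₁` is fixed it becomes the linear constraint `r + s ≤ y₁ - x₁`. Each of the two
parts is then an intersection of half-spaces and convex sublevel sets of `‖x‖ + r`, hence convex.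
The continuous function `y₁ - x₁` takes both signs on `SC_2(0,2;o)` and never vanishes there, so
`SC_2(0,2;o)` is not connected. -/

open Set

local notation "SemidiscPair" => (EuclideanSpace ℝ (Fin 2) × ℝ) × (EuclideanSpace ℝ (Fin 2) × ℝ)

lemma norm_eq_abs_apply_zero_of_apply_one_eq_zero {v : EuclideanSpace ℝ (Fin 2)}
    (hv : v 1 = 0) : ‖v‖ = |v 0| := by
  simp [EuclideanSpace.norm_eq, Fin.sum_univ_two, hv, Real.sqrt_sq_eq_abs]

lemma norm_sub_eq_abs_sub_apply_zero {x y : EuclideanSpace ℝ (Fin 2)} (hx : x 1 = 0)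
    (hy : y 1 = 0) : ‖x - y‖ = |x 0 - y 0| := by
  simpa using norm_eq_abs_apply_zero_of_apply_one_eq_zero (v := x - y) (by simp [hx, hy])

lemma apply_zero_ne_of_mem_SC02dim2 {c : SemidiscPair} (hc : c ∈ SC02dim2) :
    c.1.1 0 ≠ c.2.1 0 := by
  obtain ⟨hr, hs, hx, hy, -, -, hsep⟩ := hc
  intro h
  rw [norm_sub_eq_abs_sub_apply_zero hx hy, h, sub_self, abs_zero] at hsep
  linarith

lemma leftPart_eq :
    leftPart = {c : SemidiscPair | 0 < c.1.2} ∩ {c | 0 < c.2.2} ∩ {c | c.1.1 1 = 0} ∩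
      {c | c.2.1 1 = 0} ∩ {c | ‖c.1.1‖ + c.1.2 ≤ 1} ∩ {c | ‖c.2.1‖ + c.2.2 ≤ 1} ∩
      {c | c.1.2 + c.2.2 ≤ c.2.1 0 - c.1.1 0} := by
  ext ⟨⟨x, r⟩, y, s⟩
  simp only [leftPart, SC02dim2, mem_inter_iff, mem_ofPred_eq]
  constructor
  · rintro ⟨⟨hr, hs, hx, hy, hxr, hys, hsep⟩, hlt⟩
    rw [norm_sub_eq_abs_sub_apply_zero hx hy, abs_sub_comm, abs_of_pos (sub_pos.2 hlt)] at hsep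
    exact ⟨⟨⟨⟨⟨⟨hr, hs⟩, hx⟩, hy⟩, hxr⟩, hys⟩, hsep⟩
  · rintro ⟨⟨⟨⟨⟨⟨hr, hs⟩, hx⟩, hy⟩, hxr⟩, hys⟩, hsep⟩
    have hlt : x 0 < y 0 := by linarith
    refine ⟨⟨hr, hs, hx, hy, hxr, hys, ?_⟩, hlt⟩
    rwa [norm_sub_eq_abs_sub_apply_zero hx hy, abs_sub_comm, abs_of_pos (sub_pos.2 hlt)]

lemma convex_setOf_norm_fst_add_snd_le {E : Type*} [SeminormedAddCommGroup E] [NormedSpace ℝ E]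
    (a : ℝ) : Convex ℝ {p : E × ℝ | ‖p.1‖ + p.2 ≤ a} := by
  simpa using (((convexOn_norm convex_univ).comp_linearMap (LinearMap.fst ℝ E ℝ)).add
    ((LinearMap.snd ℝ E ℝ).convexOn convex_univ)).convex_le a

lemma convex_leftPart : Convex ℝ leftPart := by
  have hnorm_fst : Convex ℝ {c : SemidiscPair | ‖c.1.1‖ + c.1.2 ≤ 1} :=
    (convex_setOf_norm_fst_add_snd_le (E := EuclideanSpace ℝ (Fin 2)) 1).linear_preimage
      (LinearMap.fst ℝ _ (EuclideanSpace ℝ (Fin 2) × ℝ))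
  have hnorm_snd : Convex ℝ {c : SemidiscPair | ‖c.2.1‖ + c.2.2 ≤ 1} :=
    (convex_setOf_norm_fst_add_snd_le (E := EuclideanSpace ℝ (Fin 2)) 1).linear_preimage
      (LinearMap.snd ℝ (EuclideanSpace ℝ (Fin 2) × ℝ) _)
  have hsep : Convex ℝ {c : SemidiscPair | c.1.2 + c.2.2 ≤ c.2.1 0 - c.1.1 0} := by
    simpa only [sub_nonneg] using convex_halfSpace_ge
      (f := fun c : SemidiscPair => c.2.1 0 - c.1.1 0 - (c.1.2 + c.2.2))
      ⟨fun _ _ => by simp; ring, fun _ _ => by simp; ring⟩ 0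
  rw [leftPart_eq]
  exact ((((((convex_halfSpace_gt ⟨fun _ _ => rfl, fun _ _ => rfl⟩ 0).inter
    (convex_halfSpace_gt ⟨fun _ _ => rfl, fun _ _ => rfl⟩ 0)).inter
    (convex_hyperplane ⟨fun _ _ => rfl, fun _ _ => rfl⟩ 0)).inter
    (convex_hyperplane ⟨fun _ _ => rfl, fun _ _ => rfl⟩ 0)).inter hnorm_fst).inter
    hnorm_snd).inter hsep

lemma swap_mem_SC02dim2 {c : SemidiscPair} (hc : c ∈ SC02dim2) : c.swap ∈ SC02dim2 := by
  obtain ⟨hr, hs, hx, hy, hxr, hys, hsep⟩ := hc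
  exact ⟨hs, hr, hy, hx, hys, hxr, by rw [Prod.snd_swap, Prod.fst_swap, norm_sub_rev]; linarith⟩

lemma image_swap_leftPart : Prod.swap '' leftPart = rightPart := by
  ext c
  rw [image_swap_eq_preimage_swap, mem_preimage]
  exact and_congr_left' ⟨fun h => c.swap_swap ▸ swap_mem_SC02dim2 h, swap_mem_SC02dim2⟩

lemma image_swap_rightPart : Prod.swap '' rightPart = leftPart := by
  rw [← image_swap_leftPart, image_image]
  simp

lemma convex_rightPart : Convex ℝ rightPart :=
  image_swap_leftPart ▸ convex_leftPart.linear_image (LinearEquiv.prodComm ℝ _ _).toLinearMap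

lemma nonempty_leftPart : leftPart.Nonempty := by
  refine ⟨((EuclideanSpace.single 0 (-1 / 2), 1 / 4),
    (EuclideanSpace.single 0 (1 / 2), 1 / 4)), ?_⟩
  rw [leftPart_eq]
  norm_num

lemma nonempty_rightPart : rightPart.Nonempty :=
  image_swap_leftPart ▸ nonempty_leftPart.image _

lemma leftPart_inter_rightPart : leftPart ∩ rightPart = ∅ :=
  eq_empty_of_forall_notMem fun _ ⟨⟨_, hlt⟩, ⟨_, hgt⟩⟩ => lt_asymm hlt hgt

lemma leftPart_union_rightPart : leftPart ∪ rightPart = SC02dim2 := by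
  ext c
  simp only [leftPart, rightPart, mem_union, mem_sep_iff, ← and_or_left, and_iff_left_iff_imp]
  exact fun hc => (apply_zero_ne_of_mem_SC02dim2 hc).lt_or_gt

lemma not_isPreconnected_of_continuousOn_ne_zero {X : Type*} [TopologicalSpace X] {s : Set X}
    {f : X → ℝ} (hf : ContinuousOn f s) (hs : ∀ x ∈ s, f x ≠ 0) {a b : X} (ha : a ∈ s)
    (hb : b ∈ s) (hfa : f a < 0) (hfb : 0 < f b) : ¬IsPreconnected s := fun h => by
  obtain ⟨x, hx, hfx⟩ :=
    (h.image f hf).Icc_subset (mem_image_of_mem f ha) (mem_image_of_mem f hb) ⟨hfa.le, hfb.le⟩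
  exact hs x hx hfx

lemma not_isPathConnected_SC02dim2 : ¬IsPathConnected SC02dim2 := by
  obtain ⟨c, hc⟩ := nonempty_leftPart
  refine fun h => not_isPreconnected_of_continuousOn_ne_zero (f := fun c => c.2.1 0 - c.1.1 0)
    (by fun_prop) (fun c hc => sub_ne_zero.2 (apply_zero_ne_of_mem_SC02dim2 hc).symm)
    (swap_mem_SC02dim2 hc.1) hc.1 (sub_neg.2 hc.2) (sub_pos.2 hc.2) h.isConnected.isPreconnected

theorem swissCheese_dim2_two_semidiscs_two_components :
    leftPart.Nonempty ∧ rightPart.Nonempty ∧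
    Convex ℝ leftPart ∧ Convex ℝ rightPart ∧
    IsPathConnected leftPart ∧ IsPathConnected rightPart ∧
    leftPart ∩ rightPart = ∅ ∧
    leftPart ∪ rightPart = SC02dim2 ∧
    ¬ IsPathConnected SC02dim2 ∧
    Prod.swap '' leftPart = rightPart ∧ Prod.swap '' rightPart = leftPart :=
  ⟨nonempty_leftPart, nonempty_rightPart, convex_leftPart, convex_rightPart,
    convex_leftPart.isPathConnected nonempty_leftPart,
    convex_rightPart.isPathConnected nonempty_rightPart,
    leftPart_inter_rightPart, leftPart_union_rightPart, not_isPathConnected_SC02dim2,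
    image_swap_leftPart, image_swap_rightPart⟩
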